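/- arXiv:2207.02158 — 2 statements merged into one kernel-verified Lean document; each statement's English description precedes it below -/
import Mathlib

section
/- With squared Euclidean distance d(z, u_i) = ||z - u_i||_2^2 and softmax probability p(y=c|z) = exp(-d(z,u_c)) / sum_j exp(-d(z,u_j)), for any finite set of at least two pairwise distinct prototype points u_1,...,u_m in R^n, there exist an index c and a nonzero vector ε such that p(y=c | u_c) < p(y=c | u_c + ε). -/
open Real

noncomputable def sqSoftmax {n m : ℕ} (u : Fin m → EuclideanSpace ℝ (Fin n))
    (z : EuclideanSpace ℝ (Fin n)) (i : Fin m) : ℝ :=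
  Real.exp (-‖z - u i‖ ^ 2) / ∑ j, Real.exp (-‖z - u j‖ ^ 2)

/-!
The log-odds `‖z - u j‖² - ‖z - u i‖²` of class `i` against class `j` are affine in `z`:
moving `z` by `ε` raises them by `2⟪ε, u i - u j⟫`. So `p(i | ·)` strictly increases along
any `ε` with `⟪ε, u i - u j⟫ > 0` for every `j ≠ i`. If `u c` is a prototype of maximal norm,
then `ε = u c` is such a direction for `c`, since `‖u j‖ ≤ ‖u c‖` and `u j ≠ u c` force
`⟪u c, u j⟫ < ‖u c‖²`.
-/

section InnerProductSpace

variable {E : Type*} [NormedAddCommGroup E] [InnerProductSpace ℝ E]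

theorem norm_add_sub_sq_sub_norm_add_sub_sq (z ε a b : E) :
    ‖z + ε - a‖ ^ 2 - ‖z + ε - b‖ ^ 2 = ‖z - a‖ ^ 2 - ‖z - b‖ ^ 2 - 2 * inner ℝ ε (a - b) := by
  rw [add_sub_right_comm, add_sub_right_comm z ε b, norm_add_sq_real, norm_add_sq_real,
    inner_sub_left, inner_sub_left, inner_sub_right, real_inner_comm ε a, real_inner_comm ε b]
  ring

theorem inner_sub_pos_of_norm_le {x y : E} (hyx : ‖y‖ ≤ ‖x‖) (hne : y ≠ x) :
    0 < inner ℝ x (x - y) := by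
  have hpos : 0 < ‖x - y‖ ^ 2 := by
    have : x - y ≠ 0 := sub_ne_zero.2 hne.symm
    positivity
  rw [norm_sub_sq_real] at hpos
  rw [inner_sub_right, real_inner_self_eq_norm_sq]
  nlinarith [norm_nonneg y]

end InnerProductSpace

section Softmax

variable {n m : ℕ} (u : Fin m → EuclideanSpace ℝ (Fin n))

theorem sqSoftmax_eq_inv_sum_exp (z : EuclideanSpace ℝ (Fin n)) (i : Fin m) :
    sqSoftmax u z i = (∑ j, Real.exp (‖z - u i‖ ^ 2 - ‖z - u j‖ ^ 2))⁻¹ := by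
  simp only [sqSoftmax, sub_eq_add_neg, Real.exp_add, ← Finset.mul_sum, mul_inv,
    Real.exp_neg, div_eq_mul_inv]

theorem sqSoftmax_lt_sqSoftmax_add [Nontrivial (Fin m)] {i : Fin m}
    {ε : EuclideanSpace ℝ (Fin n)} (hε : ∀ j, j ≠ i → 0 < inner ℝ ε (u i - u j))
    (z : EuclideanSpace ℝ (Fin n)) :
    sqSoftmax u z i < sqSoftmax u (z + ε) i := by
  rw [sqSoftmax_eq_inv_sum_exp, sqSoftmax_eq_inv_sum_exp]
  refine inv_strictAnti₀ (Finset.sum_pos (fun _ _ => Real.exp_pos _) Finset.univ_nonempty) ?_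
  obtain ⟨j, hj⟩ := exists_ne i
  refine Finset.sum_lt_sum (fun k _ => ?_) ⟨j, Finset.mem_univ j, ?_⟩
  · rw [Real.exp_le_exp, norm_add_sub_sq_sub_norm_add_sub_sq]
    rcases eq_or_ne k i with rfl | hk
    · simp
    · linarith [hε k hk]
  · rw [Real.exp_lt_exp, norm_add_sub_sq_sub_norm_add_sub_sq]
    linarith [hε j hj]

end Softmax

theorem stmt_0 (n m : ℕ) (hm : 2 ≤ m) (u : Fin m → EuclideanSpace ℝ (Fin n))
    (hu : Function.Injective u) :
    ∃ (c : Fin m) (ε : EuclideanSpace ℝ (Fin n)), ε ≠ 0 ∧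
      sqSoftmax u (u c) c < sqSoftmax u (u c + ε) c := by
  have : Nontrivial (Fin m) := Fin.nontrivial_iff_two_le.2 hm
  obtain ⟨c, -, hc⟩ := Finset.univ.exists_max_image (fun i => ‖u i‖) Finset.univ_nonempty
  have hsep : ∀ j, j ≠ c → 0 < inner ℝ (u c) (u c - u j) := fun j hj =>
    inner_sub_pos_of_norm_le (hc j (Finset.mem_univ j)) (hu.ne hj)
  refine ⟨c, u c, fun h0 => ?_, sqSoftmax_lt_sqSoftmax_add u hsep (u c)⟩
  obtain ⟨j, hj⟩ := exists_ne c
  simpa [h0] using hsep j hj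
end

section
/- With L1 distance d(z, u_i) = ||z - u_i||_1 and softmax probability p(y=i|z) = exp(-d(z,u_i)) / Σ_j exp(-d(z,u_j)), for every index c and every vector ε ∈ R^n, p(y=c | u_c) ≥ p(y=c | u_c + ε). -/
open Real

noncomputable def l1norm {n : ℕ} (z : Fin n → ℝ) : ℝ := ∑ i, |z i|

noncomputable def l1Softmax {n m : ℕ} (u : Fin m → (Fin n → ℝ))
    (z : Fin n → ℝ) (i : Fin m) : ℝ :=
  Real.exp (-l1norm (z - u i)) / ∑ j, Real.exp (-l1norm (z - u j))

/-!
Write `d` for the distance and `Z z = ∑ⱼ exp (-d z uⱼ)` for the partition function. By the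
triangle inequality `d z uⱼ ≤ d z u_c + d u_c uⱼ`, hence `Z z ≥ exp (-d z u_c) * Z u_c`, i.e. the
probability of class `c` at `z` is at most `1 / Z u_c`, which is its value at `z = u_c`.
-/

lemma l1norm_zero {n : ℕ} : l1norm (0 : Fin n → ℝ) = 0 := by
  simp [l1norm]

lemma l1norm_sub_le_add {n : ℕ} (x y w : Fin n → ℝ) :
    l1norm (x - y) ≤ l1norm (x - w) + l1norm (w - y) := by
  simpa only [l1norm, ← Finset.sum_add_distrib, Pi.sub_apply] using
    Finset.sum_le_sum fun i _ => abs_sub_le (x i) (w i) (y i)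

section Softmax

variable {ι α : Type*} [Fintype ι] {d : α → α → ℝ}

lemma exp_neg_mul_sum_exp_neg_le_sum_exp_neg (hd : ∀ x y w, d x y ≤ d x w + d w y)
    (u : ι → α) (c : ι) (z : α) :
    exp (-d z (u c)) * ∑ j, exp (-d (u c) (u j)) ≤ ∑ j, exp (-d z (u j)) := by
  rw [Finset.mul_sum]
  gcongr with j
  rw [← exp_add, exp_le_exp]
  linarith [hd z (u j) (u c)]

lemma exp_neg_div_sum_exp_neg_le_inv (hd : ∀ x y w, d x y ≤ d x w + d w y)
    (u : ι → α) (c : ι) (z : α) :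
    exp (-d z (u c)) / ∑ j, exp (-d z (u j)) ≤ (∑ j, exp (-d (u c) (u j)))⁻¹ := by
  have hZ : ∀ w, 0 < ∑ j, exp (-d w (u j)) := fun w =>
    Finset.sum_pos (fun j _ => exp_pos _) ⟨c, Finset.mem_univ c⟩
  rw [div_le_iff₀ (hZ z), inv_mul_eq_div, le_div_iff₀ (hZ (u c))]
  exact exp_neg_mul_sum_exp_neg_le_sum_exp_neg hd u c z

end Softmax

theorem stmt_1 (n m : ℕ) (u : Fin m → (Fin n → ℝ)) (c : Fin m) (ε : Fin n → ℝ) :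
    l1Softmax u (u c) c ≥ l1Softmax u (u c + ε) c := by
  have hmax : l1Softmax u (u c) c = (∑ j, exp (-l1norm (u c - u j)))⁻¹ := by
    simp [l1Softmax, l1norm_zero]
  rw [ge_iff_le, hmax]
  exact exp_neg_div_sum_exp_neg_le_inv (d := fun x y => l1norm (x - y)) l1norm_sub_le_add
    u c (u c + ε)
end
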